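/- arXiv:1411.6816 — 7 statements merged into one kernel-verified Lean document; each statement's English description precedes it below -/
import Mathlib

section
/- Let $A$ be a Noetherian integral domain and $S$ a multiplicative subset of $A \setminus \{0\}$ such that $A$ is integrally closed in the localization $S^{-1}A$. Let $a \in A \setminus \{0\}$ and let $\mathfrak{p}$ be a prime ideal of $A$ associated to the ideal $aA$. If $\mathfrak{p} \cap S$ is non-empty, then the localization $A_{\mathfrak{p}}$ is a discrete valuation ring and $\mathfrak{p}$ has height one. -/
/-!
Write `𝔭 = (aA : b)` with `b ∉ aA` and consider `x = b / a`. If `x 𝔭 ⊆ 𝔭`, then `x` is integral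
over `A` because `𝔭` is finitely generated and nonzero; an element `s ∈ 𝔭 ∩ S` gives `sb ∈ aA`, so
`x = (sb / a) / s` lies in `S⁻¹A`, hence in `A`, i.e. `a ∣ b`, which is absurd. So some `t ∈ 𝔭`
has `tb = au` with `u ∉ 𝔭`. Then every `y ∈ 𝔭` satisfies `uy = t (yb / a)`, so `𝔭 A_𝔭 = t A_𝔭` is
principal, `A_𝔭` is a discrete valuation ring, and `ht 𝔭 = dim A_𝔭 = 1`.
-/

section

variable {A : Type*} [CommRing A]

theorem exists_mem_iff_dvd_mul_of_isAssociatedPrime [IsNoetherianRing A] {a : A} {p : Ideal A}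
    (hp : IsAssociatedPrime p (A ⧸ Ideal.span {a})) : ∃ b : A, ∀ x, x ∈ p ↔ a ∣ x * b := by
  obtain ⟨-, b', hb'⟩ := isAssociatedPrime_iff.mp hp
  obtain ⟨b, rfl⟩ := Ideal.Quotient.mk_surjective b'
  refine ⟨b, fun x => ?_⟩
  rw [hb', Submodule.mem_colon_singleton, Submodule.mem_bot, Algebra.smul_def,
    Ideal.Quotient.algebraMap_eq, ← map_mul, Ideal.Quotient.eq_zero_iff_mem,
    Ideal.mem_span_singleton]

theorem isIntegral_of_mul_ideal_le {B : Type*} [CommRing B] [IsDomain B] [Algebra A B]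
    (hinj : Function.Injective (algebraMap A B)) {I : Ideal A} (hI : I.FG) (hI0 : I ≠ ⊥) (x : B)
    (hx : ∀ t ∈ I, ∃ c ∈ I, x * algebraMap A B t = algebraMap A B c) : IsIntegral A x := by
  refine isIntegral_of_smul_mem_submodule (Submodule.map (Algebra.linearMap A B) I) ?_
    (Submodule.FG.map _ hI) x ?_
  · simpa using (Submodule.map_injective_of_injective (f := Algebra.linearMap A B) hinj).ne hI0
  · rintro _ ⟨t, ht, rfl⟩
    obtain ⟨c, hc, hxc⟩ := hx t ht
    exact ⟨c, hc, hxc.symm⟩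

section Domain

variable [IsDomain A] {a b t u : A} {p : Ideal A}

theorem exists_mul_eq_mul_notMem_of_isIntegrallyClosedIn [IsNoetherianRing A] {S : Submonoid A}
    (hS0 : (0 : A) ∉ S) [IsIntegrallyClosedIn A (Localization S)] (ha : a ≠ 0)
    (hmem : ∀ x, x ∈ p ↔ a ∣ x * b) (hb : ¬ a ∣ b) {s : A} (hsS : s ∈ S) (hsp : s ∈ p) :
    ∃ t ∈ p, ∃ u ∉ p, t * b = a * u := by
  by_contra! H
  have hSle : S ≤ nonZeroDivisors A := le_nonZeroDivisors_of_noZeroDivisors hS0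
  have : IsDomain (Localization S) := IsLocalization.isDomain_localization hSle
  set g := algebraMap A (Localization S)
  have hginj : Function.Injective g := IsLocalization.injective _ hSle
  have hga : g a ≠ 0 := (map_ne_zero_iff g hginj).mpr ha
  obtain ⟨c₀, hc₀⟩ := (hmem s).mp hsp
  set x := IsLocalization.mk' (Localization S) c₀ (⟨s, hsS⟩ : S)
  have hxa : x * g a = g b := by
    refine (IsLocalization.map_units (Localization S) (⟨s, hsS⟩ : S)).mul_left_injective ?_
    have hx := IsLocalization.mk'_spec (Localization S) c₀ (⟨s, hsS⟩ : S)
    have hgc := congrArg g hc₀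
    simp only [map_mul] at hgc
    linear_combination g a * hx - hgc
  have hxp : ∀ t ∈ p, ∃ c ∈ p, x * g t = g c := by
    intro t ht
    obtain ⟨c, hc⟩ := (hmem t).mp ht
    refine ⟨c, of_not_not fun hcp => H t ht c hcp hc, mul_right_cancel₀ hga ?_⟩
    have hgc := congrArg g hc
    simp only [map_mul] at hgc
    linear_combination g t * hxa + hgc
  have hp0 : p ≠ ⊥ := (Submodule.ne_bot_iff p).mpr ⟨a, (hmem a).mpr (dvd_mul_right a b), ha⟩
  obtain ⟨y, hy⟩ := IsIntegrallyClosedIn.isIntegral_iff.mp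
    (isIntegral_of_mul_ideal_le hginj (IsNoetherian.noetherian p) hp0 x hxp)
  exact hb ⟨y, hginj (by rw [map_mul, hy, ← hxa, mul_comm])⟩

theorem Ideal.map_atPrime_eq_span_singleton_of_mul_eq [p.IsPrime] (ha : a ≠ 0)
    (hmem : ∀ x, x ∈ p ↔ a ∣ x * b) (ht : t ∈ p) (hu : u ∉ p) (htu : t * b = a * u) :
    p.map (algebraMap A (Localization.AtPrime p)) =
      Ideal.span {algebraMap A (Localization.AtPrime p) t} := by
  set f := algebraMap A (Localization.AtPrime p)
  refine le_antisymm (Ideal.map_le_iff_le_comap.mpr fun x hx => ?_)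
    ((Ideal.span_singleton_le_iff_mem _).mpr (Ideal.mem_map_of_mem f ht))
  obtain ⟨c, hc⟩ := (hmem x).mp hx
  have hux : u * x = t * c := mul_left_cancel₀ ha <| by
    linear_combination x * htu.symm + t * hc
  have hfu : IsUnit (f u) := (IsLocalization.AtPrime.isUnit_to_map_iff _ p u).mpr hu
  rw [Ideal.mem_comap, Ideal.mem_span_singleton, ← hfu.dvd_mul_left, ← map_mul, hux, map_mul]
  exact dvd_mul_right _ _

theorem isDiscreteValuationRing_atPrime_of_isPrincipal [IsNoetherianRing A] [p.IsPrime]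
    (hp0 : p ≠ ⊥) (h : (p.map (algebraMap A (Localization.AtPrime p))).IsPrincipal) :
    IsDiscreteValuationRing (Localization.AtPrime p) := by
  have : IsNoetherianRing (Localization.AtPrime p) :=
    IsLocalization.isNoetherianRing p.primeCompl _ inferInstance
  have hnf : ¬ IsField (Localization.AtPrime p) := by
    rw [IsLocalRing.isField_iff_maximalIdeal_eq, ← Localization.AtPrime.map_eq_maximalIdeal,
      Ideal.map_eq_bot_iff_of_injective
        (IsLocalization.injective _ p.primeCompl_le_nonZeroDivisors)]
    exact hp0
  rw [Localization.AtPrime.map_eq_maximalIdeal] at h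
  exact ((IsDiscreteValuationRing.TFAE _ hnf).out 0 4).mpr h

theorem Ideal.height_eq_one_of_isDiscreteValuationRing [p.IsPrime]
    [IsDiscreteValuationRing (Localization.AtPrime p)] : p.height = 1 := by
  have h := IsLocalization.AtPrime.ringKrullDim_eq_height p (Localization.AtPrime p)
  rw [IsDiscreteValuationRing.ringKrullDim_eq_one] at h
  exact_mod_cast h.symm

end Domain

end

/-- Let `A` be a Noetherian integral domain and `S` a multiplicative subset of
`A \ {0}` such that `A` is integrally closed in the localization `S⁻¹A`.  Let `a ∈ A \ {0}` and
let `𝔭` be a prime ideal of `A` associated to the ideal `aA`.  If `𝔭 ∩ S ≠ ∅`, then the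
localization `A_𝔭` is a discrete valuation ring and `𝔭` has height one. -/
theorem stmt_0 {A : Type*} [CommRing A] [IsDomain A] [IsNoetherianRing A]
    (S : Submonoid A) (hS0 : (0 : A) ∉ S)
    (hIC : IsIntegrallyClosedIn A (Localization S))
    (a : A) (ha : a ≠ 0)
    (p : Ideal A) [hp' : p.IsPrime]
    (hp : IsAssociatedPrime p (A ⧸ Ideal.span ({a} : Set A)))
    (hpS : ∃ s ∈ S, s ∈ p) :
    IsDiscreteValuationRing (Localization.AtPrime p) ∧
      Order.height (⟨p, hp'⟩ : PrimeSpectrum A) = 1 := by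
  obtain ⟨b, hmem⟩ := exists_mem_iff_dvd_mul_of_isAssociatedPrime hp
  obtain ⟨s, hsS, hsp⟩ := hpS
  have hb : ¬ a ∣ b := fun h => hp'.ne_top <| p.eq_top_iff_one.mpr <| (hmem 1).mpr (by simpa)
  obtain ⟨t, ht, u, hu, htu⟩ :=
    exists_mul_eq_mul_notMem_of_isIntegrallyClosedIn hS0 ha hmem hb hsS hsp
  have hp0 : p ≠ ⊥ := (Submodule.ne_bot_iff p).mpr ⟨a, (hmem a).mpr (dvd_mul_right a b), ha⟩
  have hdvr : IsDiscreteValuationRing (Localization.AtPrime p) :=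
    isDiscreteValuationRing_atPrime_of_isPrincipal hp0
      ⟨_, Ideal.map_atPrime_eq_span_singleton_of_mul_eq ha hmem ht hu htu⟩
  refine ⟨hdvr, ?_⟩
  rw [← PrimeSpectrum.height_eq_orderHeight]
  exact p.height_eq_one_of_isDiscreteValuationRing
end

section
/- Let $A$ be a Noetherian integral domain and $S$ a multiplicative subset of $A \setminus \{0\}$ such that $A$ is integrally closed in $S^{-1}A$. Then for any prime ideal $\mathfrak{P}$ of $A$ with $\mathfrak{P} \cap S \neq \emptyset$, one has $\mathrm{depth}(A_{\mathfrak{P}}) \geq \min\{\mathrm{height}(\mathfrak{P}), 2\}$. -/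
/-!
Pick `s ∈ S ∩ 𝔓`; being nonzero, it is a regular element. When `height 𝔓 ≥ 2` we want
`x ∈ 𝔓` regular on `A/sA`; by prime avoidance it exists once every associated prime
`𝔮 = (sA : t)` of `A/sA` has height at most one. Let `u = t/s ∈ S⁻¹A`. If `u𝔮 ⊆ 𝔮`, then `u` is
integral over `A`, hence lies in `A`, which forces `𝔮 = A`. Otherwise some `q ∈ 𝔮` has
`c = uq ∉ 𝔮`; then `yc = q(uy)` with `uy ∈ A` for every `y ∈ 𝔮`, so `𝔮` is minimal over `qA` and
Krull's principal ideal theorem applies. Finally, a weakly regular sequence of `A` inside `𝔓`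
becomes a regular sequence of `A_𝔓`.
-/

/-- The depth of a local ring: the supremum of the lengths of regular sequences contained in
the maximal ideal. -/
noncomputable def localRingDepth (R : Type*) [CommRing R] [IsLocalRing R] : ℕ∞ :=
  sSup {n : ℕ∞ | ∃ rs : List R, (∀ x ∈ rs, x ∈ IsLocalRing.maximalIdeal R) ∧
    RingTheory.Sequence.IsRegular R rs ∧ n = rs.length}

open RingTheory.Sequence

theorem length_le_localRingDepth {R : Type*} [CommRing R] [IsLocalRing R] {rs : List R}
    (hmem : ∀ r ∈ rs, r ∈ IsLocalRing.maximalIdeal R) (hreg : IsRegular R rs) :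
    (rs.length : ℕ∞) ≤ localRingDepth R :=
  le_sSup ⟨rs, hmem, hreg, rfl⟩

theorem length_le_localRingDepth_atPrime {A : Type*} [CommRing A] (P : Ideal A) [P.IsPrime]
    {rs : List A} (hreg : IsWeaklyRegular A rs) (hmem : ∀ r ∈ rs, r ∈ P) :
    (rs.length : ℕ∞) ≤ localRingDepth (Localization.AtPrime P) := by
  simpa using length_le_localRingDepth
    (by simpa only [List.forall_mem_map, IsLocalization.AtPrime.to_map_mem_maximal_iff _ P])
    (hreg.isRegular_of_isLocalization_of_mem _ P hmem)

theorem Ideal.mem_minimalPrimes_span_singleton_of_dvd_mul {R : Type*} [CommRing R]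
    {p : Ideal R} [hp : p.IsPrime] {q c : R} (hq : q ∈ p) (hc : c ∉ p)
    (h : ∀ y ∈ p, q ∣ y * c) : p ∈ (Ideal.span {q}).minimalPrimes := by
  refine ⟨⟨hp, (Ideal.span_singleton_le_iff_mem p).mpr hq⟩, fun J ⟨hJ, hqJ⟩ hJp y hy ↦ ?_⟩
  have hyc : y * c ∈ J :=
    Ideal.mem_of_dvd _ (h y hy) ((Ideal.span_singleton_le_iff_mem J).mp hqJ)
  exact (hJ.mem_or_mem hyc).resolve_right fun hcJ ↦ hc (hJp hcJ)

theorem exists_mem_isSMulRegular_of_forall_not_le {A M : Type*} [CommRing A] [IsNoetherianRing A]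
    [AddCommGroup M] [Module A M] [Module.Finite A M] {P : Ideal A}
    (h : ∀ p ∈ associatedPrimes A M, ¬ P ≤ p) : ∃ x ∈ P, IsSMulRegular M x := by
  by_contra! hP
  have hcover : (P : Set A) ⊆ ⋃ p ∈ associatedPrimes A M, (p : Set A) := by
    rw [biUnion_associatedPrimes_eq_compl_regular]
    exact hP
  obtain ⟨p, hp, hPp⟩ := (Ideal.subset_union_prime_finite (associatedPrimes.finite A M)
    (f := id) ⊥ ⊥ fun p hp _ _ ↦ hp.isPrime).mp hcover
  exact h p hp hPp

theorem exists_eq_colon_of_mem_associatedPrimes_quotSMulTop {A : Type*} [CommRing A]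
    [IsNoetherianRing A] {s : A} {p : Ideal A} (hp : p ∈ associatedPrimes A (QuotSMulTop s A)) :
    ∃ t, p = (Ideal.span {s}).colon {t} := by
  obtain ⟨-, x, rfl⟩ := isAssociatedPrime_iff.mp hp
  obtain ⟨t, rfl⟩ := Submodule.Quotient.mk_surjective _ x
  refine ⟨t, Ideal.ext fun y ↦ ?_⟩
  rw [Submodule.mem_colon_singleton, Submodule.mem_colon_singleton, Submodule.mem_bot,
    ← Submodule.Quotient.mk_smul, Submodule.Quotient.mk_eq_zero,
    Submodule.mem_smul_pointwise_iff_exists, Ideal.mem_span_singleton']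
  simp [smul_eq_mul, mul_comm]

theorem IsIntegrallyClosedIn.dvd_of_span_singleton_mul_le {A L : Type*} [CommRing A] [IsDomain A]
    [CommRing L] [Algebra A L] {S : Submonoid A} [IsLocalization S L] (hS0 : (0 : A) ∉ S)
    [IsIntegrallyClosedIn A L] {s t : A} (hs : s ∈ S) {I : Ideal A} (hI : I.FG) (hI0 : I ≠ ⊥)
    (h : Ideal.span {t} * I ≤ Ideal.span {s} * I) : s ∣ t := by
  have hS : S ≤ nonZeroDivisors A := fun x hx ↦ mem_nonZeroDivisors_of_ne_zero fun h ↦ hS0 (h ▸ hx)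
  have : IsDomain L := IsLocalization.isDomain_of_le_nonZeroDivisors L hS
  have hinj : Function.Injective (algebraMap A L) := IsLocalization.injective L hS
  let N : Submodule A L := Submodule.map (Algebra.linearMap A L) I
  have hN0 : N ≠ ⊥ := by
    obtain ⟨q, hq, hq0⟩ := Submodule.exists_mem_ne_zero_of_ne_bot hI0
    exact Submodule.ne_bot_iff _ |>.mpr
      ⟨_, Submodule.mem_map_of_mem hq, (map_ne_zero_iff _ hinj).mpr hq0⟩
  have hstable : ∀ n ∈ N, IsLocalization.mk' L t ⟨s, hs⟩ • n ∈ N := by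
    rintro _ ⟨q, hq, rfl⟩
    obtain ⟨c, hc, hsc⟩ := Ideal.mem_span_singleton_mul.mp
      (h (Ideal.mem_span_singleton_mul.mpr ⟨q, hq, rfl⟩))
    refine ⟨c, hc, ?_⟩
    rw [Algebra.linearMap_apply, Algebra.linearMap_apply, smul_eq_mul, mul_comm,
      IsLocalization.mul_mk'_eq_mk'_of_mul, mul_comm q, ← hsc]
    exact (IsLocalization.mk'_mul_cancel_left c ⟨s, hs⟩).symm
  obtain ⟨y, hy⟩ := IsIntegrallyClosedIn.isIntegral_iff.mp
    (isIntegral_of_smul_mem_submodule N hN0 (Submodule.FG.map _ hI) _ hstable)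
  refine ⟨y, hinj ?_⟩
  rw [map_mul, hy, IsLocalization.mul_mk'_eq_mk'_of_mul]
  exact (IsLocalization.mk'_mul_cancel_left t ⟨s, hs⟩).symm

theorem Ideal.height_le_one_of_mem_associatedPrimes_quotSMulTop {A L : Type*} [CommRing A]
    [IsDomain A] [IsNoetherianRing A] [CommRing L] [Algebra A L] {S : Submonoid A}
    [IsLocalization S L] (hS0 : (0 : A) ∉ S) [IsIntegrallyClosedIn A L] {s : A} (hs : s ∈ S)
    {p : Ideal A} (hp : p ∈ associatedPrimes A (QuotSMulTop s A)) : p.height ≤ 1 := by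
  have hs0 : s ≠ 0 := fun h ↦ hS0 (h ▸ hs)
  have hprime : p.IsPrime := hp.isPrime
  obtain ⟨t, rfl⟩ := exists_eq_colon_of_mem_associatedPrimes_quotSMulTop hp
  set p := (Ideal.span {s}).colon {t}
  have hmem : ∀ y, y ∈ p ↔ s ∣ y * t := fun y ↦ by
    rw [Submodule.mem_colon_singleton, smul_eq_mul, Ideal.mem_span_singleton]
  by_cases h : Ideal.span {t} * p ≤ Ideal.span {s} * p
  · have hp0 : p ≠ ⊥ := fun hp0 ↦ hs0 <| by
      simpa [hp0] using (hmem s).mpr (dvd_mul_right s t)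
    have hst := IsIntegrallyClosedIn.dvd_of_span_singleton_mul_le (L := L) hS0 hs
      (IsNoetherian.noetherian p) hp0 h
    exact absurd ((hmem 1).mpr (by simpa using hst)) hprime.one_notMem
  · obtain ⟨_, hz, hzs⟩ := SetLike.not_le_iff_exists.mp h
    obtain ⟨q, hq, rfl⟩ := Ideal.mem_span_singleton_mul.mp hz
    obtain ⟨c, hc⟩ := (hmem q).mp hq
    have hcp : c ∉ p := fun hcp ↦
      hzs (Ideal.mem_span_singleton_mul.mpr ⟨c, hcp, by rw [mul_comm t, hc]⟩)
    refine Ideal.height_le_one_of_isPrincipal_of_mem_minimalPrimes (Ideal.span {q}) p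
      (Ideal.mem_minimalPrimes_span_singleton_of_dvd_mul hq hcp fun y hy ↦ ?_)
    obtain ⟨d, hd⟩ := (hmem y).mp hy
    exact ⟨d, mul_left_cancel₀ hs0 (by linear_combination q * hd - y * hc)⟩

/-- Let `A` be a Noetherian integral domain and `S` a multiplicative subset of
`A \ {0}` such that `A` is integrally closed in `S⁻¹A`.  Then for any prime ideal `𝔓` of `A`
with `𝔓 ∩ S ≠ ∅`, one has `depth (A_𝔓) ≥ min (height 𝔓, 2)`. -/
theorem stmt_1 {A : Type*} [CommRing A] [IsDomain A] [IsNoetherianRing A]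
    (S : Submonoid A) (hS0 : (0 : A) ∉ S)
    (hIC : IsIntegrallyClosedIn A (Localization S))
    (P : Ideal A) [hP : P.IsPrime]
    (hPS : ∃ s ∈ S, s ∈ P) :
    min (Order.height (⟨P, hP⟩ : PrimeSpectrum A)) 2 ≤
      localRingDepth (Localization.AtPrime P) := by
  obtain ⟨s, hs, hsP⟩ := hPS
  have := hIC
  have hsreg : IsSMulRegular A s := .of_ne_zero fun h ↦ hS0 (h ▸ hs)
  rw [← PrimeSpectrum.height_eq_orderHeight]
  rcases le_or_gt P.height 1 with hP1 | hP1
  · calc min P.height 2 ≤ ([s].length : ℕ∞) := min_le_of_left_le (by simpa using hP1)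
      _ ≤ _ := length_le_localRingDepth_atPrime P (.cons hsreg (.nil _ _)) (by simpa)
  · have hAss : ∀ p ∈ associatedPrimes A (QuotSMulTop s A), ¬ P ≤ p := fun p hp hPp ↦
      ((Ideal.height_mono hPp).trans <| Ideal.height_le_one_of_mem_associatedPrimes_quotSMulTop
        (L := Localization S) hS0 hs hp).not_gt hP1
    obtain ⟨x, hxP, hx⟩ := exists_mem_isSMulRegular_of_forall_not_le hAss
    calc min P.height 2 ≤ ([s, x].length : ℕ∞) := by simp
      _ ≤ _ := length_le_localRingDepth_atPrime P (.cons hsreg (.cons hx (.nil _ _)))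
          (by simp [hsP, hxP])
end

section
/- Let $A$ be a Noetherian integral domain and $S$ a multiplicative subset of $A \setminus \{0\}$ such that $A$ is integrally closed in $S^{-1}A$. Then $A = S^{-1}A \cap \bigcap_{\mathfrak{P}} A_{\mathfrak{P}}$, where the intersection (inside the fraction field of $A$) is taken over all prime ideals $\mathfrak{P}$ of $A$ of height one such that $\mathfrak{P} \cap S \neq \emptyset$. -/
/-!
Suppose `x ∈ S⁻¹A ∩ ⋂ A_𝔓` but `x ∉ A`. The ideals `(A :_A y) = {t | t y ∈ A}` are the annihilators
of the elements of the `A`-module `K/A`, so Noetherianity gives an associated prime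
`P = (A :_A y) ⊇ (A :_A x)`; it meets `S`, since `(A :_A x)` does. If `P y ⊆ P`, then `y` acts on
the faithful finitely generated module `P`, hence is integral over `A`; as `s y ∈ A` for some
`s ∈ S`, `y` lies in `S⁻¹A`, so `y ∈ A` and `P = A`, which is absurd. Otherwise `p y = u ∉ P` for
some `p ∈ P`, and then `u P ⊆ p A` makes `P` minimal over `p A`, so `P` has height one by Krull's
principal ideal theorem. But `x ∈ A_P` means `(A :_A x) ⊄ P`.
-/

open Submodule nonZeroDivisors

theorem Submodule.colon_bot_singleton_mkQ {R M : Type*} [CommRing R] [AddCommGroup M] [Module R M]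
    (N : Submodule R M) (y : M) : (⊥ : Submodule R (M ⧸ N)).colon {N.mkQ y} = N.colon {y} := by
  ext r
  simp only [mem_colon_singleton, mem_bot, mkQ_apply, ← Quotient.mk_smul, Quotient.mk_eq_zero]

theorem Submodule.exists_isPrime_colon_singleton_ge {R M : Type*} [CommRing R] [IsNoetherianRing R]
    [AddCommGroup M] [Module R M] (N : Submodule R M) {x : M} (hx : x ∉ N) :
    ∃ y, (N.colon {y}).IsPrime ∧ N.colon {x} ≤ N.colon {y} := by
  obtain ⟨P, hP, hxP⟩ := exists_le_isAssociatedPrime_of_isNoetherianRing R (N.mkQ x)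
    (by rwa [Ne, mkQ_apply, Quotient.mk_eq_zero])
  obtain ⟨hPprime, q, rfl⟩ := isAssociatedPrime_iff.mp hP
  obtain ⟨y, rfl⟩ := N.mkQ_surjective q
  simp only [colon_bot_singleton_mkQ] at hPprime hxP
  exact ⟨y, hPprime, hxP⟩

theorem Submodule.mem_colon_one_singleton {A K : Type*} [CommRing A] [CommRing K] [Algebra A K]
    {t : A} {z : K} :
    t ∈ (1 : Submodule A K).colon {z} ↔ ∃ a : A, algebraMap A K t * z = algebraMap A K a := by
  simp only [mem_colon_singleton, mem_one, Algebra.smul_def, eq_comm]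

theorem isIntegral_of_forall_smul_mem_ideal {A K : Type*} [CommRing A] [IsNoetherianRing A] [Field K]
    [Algebra A K] [FaithfulSMul A K] {I : Ideal A} (hI : I ≠ ⊥) {y : K}
    (hy : ∀ p ∈ I, ∃ q ∈ I, algebraMap A K q = p • y) : IsIntegral A y := by
  refine isIntegral_of_smul_mem_submodule (Submodule.map (Algebra.linearMap A K) I) ?_
    ((IsNoetherian.noetherian I).map _) y ?_
  · simpa only [Submodule.map_bot] using
      (map_injective_of_injective (f := Algebra.linearMap A K)
        (FaithfulSMul.algebraMap_injective A K)).ne hI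
  · rintro _ ⟨p, hp, rfl⟩
    obtain ⟨q, hq, hqp⟩ := hy p hp
    exact ⟨q, hq, by simp [hqp, Algebra.smul_def, mul_comm]⟩

theorem IsIntegrallyClosedIn.mem_one_of_smul_mem_one {A K : Type*} [CommRing A] [CommRing K]
    [Algebra A K] [IsFractionRing A K] {S : Submonoid A} (hS : S ≤ A⁰)
    (hIC : IsIntegrallyClosedIn A (Localization S)) {y : K} (hy : IsIntegral A y) {s : A}
    (hs : s ∈ S) (hsy : s • y ∈ (1 : Submodule A K)) : y ∈ (1 : Submodule A K) := by
  let f := Localization.mapToFractionRing K S (Localization S) hS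
  have hf : Function.Injective f := (IsLocalization.lift_injective_iff _).2 fun a b =>
    ⟨fun h => congr_arg _ (IsLocalization.injective _ hS h),
      fun h => congr_arg _ (IsFractionRing.injective A K h)⟩
  obtain ⟨a, ha⟩ := mem_one.mp hsy
  have hfz : f (IsLocalization.mk' _ a ⟨s, hs⟩) = y := by
    simp [f, IsLocalization.lift_mk'_spec, ha, Algebra.smul_def]
  obtain ⟨b, hb⟩ := (isIntegrallyClosedIn_iff.mp hIC).2 ((isIntegral_algHom_iff f hf).mp (hfz ▸ hy))
  exact mem_one.mpr ⟨b, by rw [← hfz, ← hb, AlgHom.commutes]⟩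

theorem mem_minimalPrimes_span_singleton_of_smul_eq {A K : Type*} [CommRing A] [CommRing K]
    [Algebra A K] [FaithfulSMul A K] {y : K} (hP : ((1 : Submodule A K).colon {y}).IsPrime)
    {p u : A} (hpu : algebraMap A K u = p • y) (hu : u ∉ (1 : Submodule A K).colon {y}) :
    (1 : Submodule A K).colon {y} ∈ (Ideal.span {p}).minimalPrimes := by
  have hp : p ∈ (1 : Submodule A K).colon {y} := mem_colon_singleton.mpr (mem_one.mpr ⟨u, hpu⟩)
  refine ⟨⟨hP, (Ideal.span_singleton_le_iff_mem _).mpr hp⟩, fun Q ⟨hQ, hpQ⟩ hQP m hm => ?_⟩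
  obtain ⟨c, hc⟩ := mem_one.mp (mem_colon_singleton.mp hm)
  have hum : u * m = p * c := FaithfulSMul.algebraMap_injective A K <| by
    rw [map_mul, map_mul, hpu, hc, Algebra.smul_def, Algebra.smul_def]; ring
  have hpcQ : p * c ∈ Q := Q.mul_mem_right c ((Ideal.span_singleton_le_iff_mem _).mp hpQ)
  exact (hQ.mem_or_mem (hum ▸ hpcQ)).resolve_left fun huQ => hu (hQP huQ)

theorem Ideal.height_eq_one_of_mem_minimalPrimes_span_singleton {R : Type*} [CommRing R]
    [IsNoetherianRing R] [IsDomain R] {p : R} {P : Ideal R} (hP : P ∈ (span {p}).minimalPrimes)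
    (hP0 : P ≠ ⊥) : P.height = 1 :=
  le_antisymm (height_le_one_of_isPrincipal_of_mem_minimalPrimes _ P hP)
    (Order.one_le_iff_ne_zero.mpr (by simpa using hP0))

theorem isIntegral_or_height_colon_one_singleton_eq_one {A K : Type*} [CommRing A] [IsDomain A]
    [IsNoetherianRing A] [Field K] [Algebra A K] [FaithfulSMul A K] {y : K}
    (hP : ((1 : Submodule A K).colon {y}).IsPrime) (hP0 : (1 : Submodule A K).colon {y} ≠ ⊥) :
    IsIntegral A y ∨ ((1 : Submodule A K).colon {y}).height = 1 := by
  by_cases hstab : ∀ p ∈ (1 : Submodule A K).colon {y}, ∃ q ∈ (1 : Submodule A K).colon {y},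
      algebraMap A K q = p • y
  · exact .inl (isIntegral_of_forall_smul_mem_ideal hP0 hstab)
  · push Not at hstab
    obtain ⟨p, hp, hpu⟩ := hstab
    obtain ⟨u, hu⟩ := mem_one.mp (mem_colon_singleton.mp hp)
    exact .inr <| Ideal.height_eq_one_of_mem_minimalPrimes_span_singleton
      (mem_minimalPrimes_span_singleton_of_smul_eq hP hu fun hu' => hpu u hu' hu) hP0

/-- Let `A` be a Noetherian integral domain and `S` a multiplicative subset of
`A \ {0}` such that `A` is integrally closed in `S⁻¹A`.  Then, inside the fraction field `K` of
`A`, one has `A = S⁻¹A ∩ ⋂ A_𝔓`, where the intersection is over all primes `𝔓` of height one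
with `𝔓 ∩ S ≠ ∅`.  Membership of `x ∈ K` in `S⁻¹A` (resp. `A_𝔓`) is expressed by saying that
`s·x ∈ A` for some `s ∈ S` (resp. `t·x ∈ A` for some `t ∉ 𝔓`). -/
theorem stmt_2 {A : Type*} [CommRing A] [IsDomain A] [IsNoetherianRing A]
    (S : Submonoid A) (hS0 : (0 : A) ∉ S)
    (hIC : IsIntegrallyClosedIn A (Localization S))
    (K : Type*) [Field K] [Algebra A K] [IsFractionRing A K]
    (x : K)
    (hxS : ∃ a : A, ∃ s ∈ S, algebraMap A K s * x = algebraMap A K a)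
    (hxP : ∀ (P : Ideal A) (hP : P.IsPrime),
      Order.height (⟨P, hP⟩ : PrimeSpectrum A) = 1 → (∃ s ∈ S, s ∈ P) →
      ∃ a : A, ∃ t : A, t ∉ P ∧ algebraMap A K t * x = algebraMap A K a) :
    ∃ a : A, algebraMap A K a = x := by
  rw [← mem_one]
  by_contra hx
  obtain ⟨y, hP, hxy⟩ := (1 : Submodule A K).exists_isPrime_colon_singleton_ge hx
  obtain ⟨a₀, s₀, hs₀, hs₀x⟩ := hxS
  have hs₀P : s₀ ∈ (1 : Submodule A K).colon {y} := hxy (mem_colon_one_singleton.mpr ⟨a₀, hs₀x⟩)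
  have hP0 : (1 : Submodule A K).colon {y} ≠ ⊥ := fun h =>
    hS0 (by rw [h, Ideal.mem_bot] at hs₀P; exact hs₀P ▸ hs₀)
  rcases isIntegral_or_height_colon_one_singleton_eq_one hP hP0 with hy | hheight
  · refine hP.ne_top ((colon_eq_top_iff_subset _).mpr (Set.singleton_subset_iff.mpr ?_))
    exact hIC.mem_one_of_smul_mem_one (le_nonZeroDivisors_of_noZeroDivisors hS0) hy hs₀
      (mem_colon_singleton.mp hs₀P)
  · obtain ⟨a, t, ht, htx⟩ := hxP _ hP ((PrimeSpectrum.height_eq_orderHeight ⟨_, hP⟩).symm.trans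
      hheight) ⟨s₀, hs₀, hs₀P⟩
    exact ht (hxy (mem_colon_one_singleton.mpr ⟨a, htx⟩))
end

section
/- Let $M$ be a free $\mathbb{Z}$-module of finite rank and $r: M \to N$ a surjective homomorphism of $\mathbb{Z}$-modules. Let $\Gamma$ be a symmetric finite subset of $M$ (i.e., $\gamma \in \Gamma$ implies $-\gamma \in \Gamma$). Then $\log \#\Gamma - \log \#(\ker(r) \cap (2 \ast \Gamma)) \leq \log \# r(\Gamma) \leq \log \#(2 \ast \Gamma) - \log \#(\ker(r) \cap \Gamma)$, where $2 \ast \Gamma := \{\gamma_1 + \gamma_2 : \gamma_1, \gamma_2 \in \Gamma\}$. -/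
open Real

lemma aux_ncard_prod {α β : Type*} (s : Set α) (t : Set β) :
    (s ×ˢ t).ncard = s.ncard * t.ncard := by
  rw [← Nat.card_coe_set_eq, ← Nat.card_coe_set_eq, ← Nat.card_coe_set_eq,
    Nat.card_congr (Equiv.Set.prod s t), Nat.card_prod]

/-- **Yuan's inequality.** Let `M` be a free `ℤ`-module of finite rank and
`r : M → N` a surjective homomorphism of `ℤ`-modules.  Let `Γ` be a symmetric finite subset of
`M`.  Then `log #Γ - log #(ker r ∩ (2∗Γ)) ≤ log #(r(Γ)) ≤ log #(2∗Γ) - log #(ker r ∩ Γ)`,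
where `2∗Γ = {γ₁ + γ₂ : γ₁, γ₂ ∈ Γ}`. -/
theorem stmt_4 {M N : Type*} [AddCommGroup M] [AddCommGroup N]
    [Module.Free ℤ M] [Module.Finite ℤ M]
    (r : M →ₗ[ℤ] N) (hr : Function.Surjective r)
    (Γ : Set M) (hΓfin : Γ.Finite) (hΓsymm : ∀ γ ∈ Γ, -γ ∈ Γ) :
    Real.log (Γ.ncard) -
        Real.log ((((LinearMap.ker r : Set M)) ∩ {z | ∃ x ∈ Γ, ∃ y ∈ Γ, z = x + y}).ncard) ≤
      Real.log ((r '' Γ).ncard) ∧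
    Real.log ((r '' Γ).ncard) ≤
      Real.log (({z | ∃ x ∈ Γ, ∃ y ∈ Γ, z = x + y} : Set M).ncard) -
        Real.log (((LinearMap.ker r : Set M) ∩ Γ).ncard) := by
  set S2 : Set M := {z | ∃ x ∈ Γ, ∃ y ∈ Γ, z = x + y} with hS2
  set K : Set M := (LinearMap.ker r : Set M) with hK
  -- finiteness facts
  have hS2fin : S2.Finite := by
    have : S2 ⊆ Set.image2 (· + ·) Γ Γ := by
      rintro z ⟨x, hx, y, hy, rfl⟩; exact ⟨x, hx, y, hy, rfl⟩
    exact (hΓfin.image2 _ hΓfin).subset this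
  rcases Γ.eq_empty_or_nonempty with hΓe | ⟨γ₀, hγ₀⟩
  · subst hΓe
    have hS2e : S2 = ∅ := by
      ext z; simp [hS2]
    simp [hS2e]
  -- choice of section
  have hsec : ∀ b ∈ r '' Γ, ∃ γ ∈ Γ, r γ = b := by
    rintro b ⟨γ, hγ, rfl⟩; exact ⟨γ, hγ, rfl⟩
  classical
  set s : N → M := fun b => if h : ∃ γ ∈ Γ, r γ = b then h.choose else 0 with hs
  have hsΓ : ∀ b ∈ r '' Γ, s b ∈ Γ := by
    intro b hb
    have h := hsec b hb
    simp only [hs, dif_pos h]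
    exact h.choose_spec.1
  have hsr : ∀ b ∈ r '' Γ, r (s b) = b := by
    intro b hb
    have h := hsec b hb
    simp only [hs, dif_pos h]
    exact h.choose_spec.2
  -- positivity facts
  have h0S2 : (0 : M) ∈ K ∩ S2 := by
    refine ⟨by simp [hK], γ₀, hγ₀, -γ₀, hΓsymm _ hγ₀, by simp⟩
  have hΓpos : 0 < Γ.ncard := by
    rw [Set.ncard_pos hΓfin]; exact ⟨γ₀, hγ₀⟩
  have hKS2pos : 0 < (K ∩ S2).ncard := by
    rw [Set.ncard_pos (hS2fin.subset Set.inter_subset_right)]; exact ⟨0, h0S2⟩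
  have hrΓfin : (r '' Γ).Finite := hΓfin.image r
  have hrΓpos : 0 < (r '' Γ).ncard := by
    rw [Set.ncard_pos hrΓfin]; exact ⟨r γ₀, γ₀, hγ₀, rfl⟩
  have hS2pos : 0 < S2.ncard := by
    rw [Set.ncard_pos hS2fin]; exact ⟨γ₀ + γ₀, γ₀, hγ₀, γ₀, hγ₀, rfl⟩
  constructor
  · -- left inequality: #Γ ≤ #r(Γ) * #(K ∩ S2)
    have hcard : Γ.ncard ≤ (r '' Γ).ncard * (K ∩ S2).ncard := by
      rw [← aux_ncard_prod]
      refine Set.ncard_le_ncard_of_injOn (fun γ => (r γ, s (r γ) - γ)) ?_ ?_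
        ((hrΓfin.prod (hS2fin.subset Set.inter_subset_right)))
      · intro γ hγ
        have hbr : r γ ∈ r '' Γ := ⟨γ, hγ, rfl⟩
        refine ⟨hbr, ?_, s (r γ), hsΓ _ hbr, -γ, hΓsymm _ hγ, by abel⟩
        simp [hK, LinearMap.mem_ker, map_sub, hsr _ hbr]
      · intro γ₁ h₁ γ₂ h₂ h
        simp only [Prod.mk.injEq] at h
        obtain ⟨h1, h2⟩ := h
        rw [h1] at h2
        simpa using congrArg (fun z => -(z - s (r γ₂))) h2
    have : Real.log Γ.ncard ≤ Real.log ((r '' Γ).ncard) + Real.log ((K ∩ S2).ncard) := by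
      rw [← Real.log_mul (by positivity) (by positivity)]
      refine Real.log_le_log (by exact_mod_cast hΓpos) ?_
      exact_mod_cast hcard
    linarith
  · -- right inequality
    rcases (K ∩ Γ).eq_empty_or_nonempty with he | hne
    · rw [he]
      simp only [Set.ncard_empty, Nat.cast_zero, Real.log_zero, sub_zero]
      have hcard : (r '' Γ).ncard ≤ S2.ncard := by
        calc (r '' Γ).ncard ≤ Γ.ncard := Set.ncard_image_le hΓfin
        _ ≤ S2.ncard := by
            refine Set.ncard_le_ncard_of_injOn (fun γ => γ + γ₀) ?_ ?_ hS2fin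
            · intro γ hγ; exact ⟨γ, hγ, γ₀, hγ₀, rfl⟩
            · intro a _ b _ h; exact add_right_cancel h
      exact Real.log_le_log (by exact_mod_cast hrΓpos) (by exact_mod_cast hcard)
    · have hKΓpos : 0 < (K ∩ Γ).ncard := by
        rw [Set.ncard_pos (hΓfin.subset Set.inter_subset_right)]; exact hne
      have hcard : (r '' Γ).ncard * (K ∩ Γ).ncard ≤ S2.ncard := by
        rw [← aux_ncard_prod]
        refine Set.ncard_le_ncard_of_injOn (fun p => s p.1 + p.2) ?_ ?_ hS2fin
        · rintro ⟨b, k⟩ ⟨hb, hkK, hkΓ⟩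
          exact ⟨s b, hsΓ _ hb, k, hkΓ, rfl⟩
        · rintro ⟨b₁, k₁⟩ ⟨hb₁, hk₁K, _⟩ ⟨b₂, k₂⟩ ⟨hb₂, hk₂K, _⟩ h
          simp only at h
          have : r (s b₁ + k₁) = r (s b₂ + k₂) := by rw [h]
          rw [map_add, map_add, hsr _ hb₁, hsr _ hb₂] at this
          have hk₁0 : r k₁ = 0 := hk₁K
          have hk₂0 : r k₂ = 0 := hk₂K
          rw [hk₁0, hk₂0, add_zero, add_zero] at this
          subst this
          have : k₁ = k₂ := by
            have := h
            exact add_left_cancel this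
          simp [this]
      have : Real.log ((r '' Γ).ncard) + Real.log ((K ∩ Γ).ncard) ≤ Real.log S2.ncard := by
        rw [← Real.log_mul (by positivity) (by positivity)]
        refine Real.log_le_log (by positivity) ?_
        exact_mod_cast hcard
      linarith
end

section
/- Let $M$ be a free $\mathbb{Z}$-module of finite rank, let $\Delta$ be a bounded symmetric convex subset of $M \otimes_{\mathbb{Z}} \mathbb{R}$, and let $a \geq 1$ be a real number. Then $0 \leq \log \#(M \cap a\Delta) - \log \#(M \cap \Delta) \leq \log(\lceil 2a \rceil) \cdot \mathrm{rk}_{\mathbb{Z}} M$. -/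
/-!
Since `Δ` is convex and symmetric, `aΔ - aΔ = 2aΔ ⊆ kΔ` for `k = ⌈2a⌉`. Hence two lattice points
of `aΔ` that are congruent modulo `kM` differ by `k u` with `u ∈ M ∩ Δ`, so each of the
`k ^ rk M` classes of `M / kM` meets `aΔ` in at most `#(M ∩ Δ)` points.
-/

open Real Pointwise Set Module

theorem Set.encard_le_card_mul_of_encard_fiber_le {α β : Type*} [Fintype β] (f : α → β)
    {T : Set α} {N : ℕ∞} (h : ∀ c, (T ∩ f ⁻¹' {c}).encard ≤ N) :
    T.encard ≤ Fintype.card β * N := by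
  calc T.encard = (⋃ c, T ∩ f ⁻¹' {c}).encard := by
          rw [← inter_iUnion, ← preimage_iUnion, iUnion_of_singleton, preimage_univ, inter_univ]
    _ ≤ ∑ c, (T ∩ f ⁻¹' {c}).encard := encard_iUnion_le_of_fintype _
    _ ≤ ∑ _c : β, N := Finset.sum_le_sum fun c _ => h c
    _ = Fintype.card β * N := by simp [nsmul_eq_mul]

theorem encard_le_pow_finrank_mul_encard {G : Type*} [AddCommGroup G] [Free ℤ G]
    [Module.Finite ℤ G] {k : ℕ} (hk : k ≠ 0) {S T : Set G}
    (h : ∀ m ∈ T, ∀ m' ∈ T, ∀ u, k • u = m - m' → u ∈ S) :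
    T.encard ≤ k ^ finrank ℤ G * S.encard := by
  set H := (nsmulAddMonoidHom (α := G) k).range
  have hindex : H.index = k ^ finrank ℤ G := AddSubgroup.index_range_nsmul G k
  have : H.FiniteIndex := ⟨by rw [hindex]; exact pow_ne_zero _ hk⟩
  have := Fintype.ofFinite (G ⧸ H)
  have hcard : Fintype.card (G ⧸ H) = k ^ finrank ℤ G := by
    rw [← Nat.card_eq_fintype_card, ← AddSubgroup.index, hindex]
  calc T.encard ≤ Fintype.card (G ⧸ H) * S.encard := by
        refine encard_le_card_mul_of_encard_fiber_le (QuotientAddGroup.mk (s := H)) fun c => ?_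
        rcases (T ∩ QuotientAddGroup.mk ⁻¹' {c}).eq_empty_or_nonempty with hempty | ⟨m₀, hm₀, hc₀⟩
        · simp [hempty]
        have hfiber : T ∩ QuotientAddGroup.mk ⁻¹' {c} ⊆ (fun u => m₀ + k • u) '' S := by
          rintro m ⟨hm, hc⟩
          obtain ⟨u, hu⟩ : -m₀ + m ∈ H :=
            QuotientAddGroup.eq.1 ((mem_singleton_iff.1 hc₀).trans (mem_singleton_iff.1 hc).symm)
          simp only [nsmulAddMonoidHom_apply] at hu
          refine ⟨u, h m hm m₀ hm₀ u ?_, ?_⟩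
          · rw [hu]; abel
          · dsimp only; rw [hu]; abel
        exact (encard_le_encard hfiber).trans (encard_image_le _ _)
    _ = k ^ finrank ℤ G * S.encard := by rw [hcard]; push_cast; rfl

theorem Balanced.sub_mem_smul {V : Type*} [AddCommGroup V] [Module ℝ V] {s : Set V}
    (hbal : Balanced ℝ s) (hconv : Convex ℝ s) {a c : ℝ} (ha : 0 ≤ a) (hc : 2 * a ≤ c)
    {x y : V} (hx : x ∈ a • s) (hy : y ∈ a • s) : x - y ∈ c • s := by
  have hxy : x - y ∈ (a + a) • s := by
    have := sub_mem_sub hx hy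
    rwa [sub_eq_add_neg, ← smul_set_neg, hbal.neg_eq, ← hconv.add_smul ha ha] at this
  refine hbal.smul_mono ?_ hxy
  rw [norm_of_nonneg (by linarith), norm_of_nonneg (by linarith)]
  linarith

theorem log_ncard_sub_log_ncard_mem_Icc {α : Type*} {S T : Set α} (hST : S ⊆ T) {K : ℕ}
    (hK : K ≠ 0) (hT : T.encard ≤ K * S.encard) :
    log T.ncard - log S.ncard ∈ Icc 0 (log K) := by
  have hlogK : 0 ≤ log K := log_natCast_nonneg K
  by_cases hS : S.Finite
  swap
  · simp [Infinite.ncard hS, Infinite.ncard fun hT => hS (hT.subset hST), hlogK]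
  have hTfin : T.Finite := finite_of_encard_le_coe <| by
    rw [← hS.cast_ncard_eq] at hT; exact_mod_cast hT
  have hle : S.ncard ≤ T.ncard := ncard_le_ncard hST hTfin
  have hTle : T.ncard ≤ K * S.ncard := by
    rw [← hS.cast_ncard_eq, ← hTfin.cast_ncard_eq] at hT; exact_mod_cast hT
  rcases S.ncard.eq_zero_or_pos with hzero | hpos
  · simp [hzero, show T.ncard = 0 by simpa [hzero] using hTle, hlogK]
  have hSpos : (0 : ℝ) < S.ncard := by exact_mod_cast hpos
  constructor
  · exact sub_nonneg.2 (log_le_log hSpos (by exact_mod_cast hle))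
  · rw [sub_le_iff_le_add, ← log_mul (by positivity) hSpos.ne']
    exact log_le_log (by exact_mod_cast hpos.trans_le hle) (by exact_mod_cast hTle)

theorem Submodule.encard_coe_inter {R V : Type*} [Semiring R] [AddCommMonoid V] [Module R V]
    (M : Submodule R V) (X : Set V) :
    ((M : Set V) ∩ X).encard = ((↑) ⁻¹' X : Set M).encard := by
  rw [← Subtype.image_preimage_coe, Subtype.val_injective.encard_image]; rfl

theorem stmt_5_general {V : Type*} [NormedAddCommGroup V] [NormedSpace ℝ V]
    (M : Submodule ℤ V) [Module.Free ℤ ↥M] [Module.Finite ℤ ↥M]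
    (Δ : Set V) (hΔconv : Convex ℝ Δ)
    (hΔsymm : ∀ x ∈ Δ, -x ∈ Δ)
    (a : ℝ) (ha : 1 ≤ a) :
    0 ≤ Real.log ((((M : Set V)) ∩ a • Δ).ncard) - Real.log (((M : Set V) ∩ Δ).ncard) ∧
    Real.log (((M : Set V) ∩ a • Δ).ncard) - Real.log (((M : Set V) ∩ Δ).ncard) ≤
      Real.log (⌈2 * a⌉₊ : ℝ) * (Module.finrank ℤ ↥M) := by
  set k := ⌈2 * a⌉₊
  have hk : k ≠ 0 := (Nat.ceil_pos.2 (by linarith)).ne'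
  have hbal : Balanced ℝ Δ := (balanced_iff_neg_mem hΔconv).2 hΔsymm
  have hsub : (M : Set V) ∩ Δ ⊆ (M : Set V) ∩ a • Δ :=
    inter_subset_inter_right _ (hbal.subset_smul (by rwa [norm_of_nonneg (by linarith)]))
  have hcount :
      ((M : Set V) ∩ a • Δ).encard ≤ (k ^ finrank ℤ M : ℕ) * ((M : Set V) ∩ Δ).encard := by
    rw [M.encard_coe_inter, M.encard_coe_inter]
    push_cast
    refine encard_le_pow_finrank_mul_encard hk fun m hm m' hm' u hu => ?_
    have hdiff : (k : ℝ) • (u : V) ∈ (k : ℝ) • Δ := by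
      rw [Nat.cast_smul_eq_nsmul, ← Submodule.coe_smul_of_tower, hu, Submodule.coe_sub]
      exact hbal.sub_mem_smul hΔconv (by linarith) (by linarith [Nat.le_ceil (2 * a)]) hm hm'
    exact (smul_mem_smul_set_iff₀ (Nat.cast_ne_zero.2 hk) Δ (u : V)).1 hdiff
  rw [mul_comm, ← log_pow, ← Nat.cast_pow]
  exact log_ncard_sub_log_ncard_mem_Icc hsub (pow_ne_zero _ hk) hcount

/-- Let `M` be a free `ℤ`-module of finite rank, `Δ` a bounded symmetric convex
subset of `M ⊗ ℝ`, and `a ≥ 1` a real number.  Then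
`0 ≤ log #(M ∩ aΔ) - log #(M ∩ Δ) ≤ log ⌈2a⌉ · rk M`.
Here `M ⊗ ℝ` is realized as the real span of a lattice `M` inside a finite-dimensional real
vector space `V`. -/
theorem stmt_5 {V : Type*} [NormedAddCommGroup V] [NormedSpace ℝ V]
    [FiniteDimensional ℝ V]
    (M : Submodule ℤ V) [Module.Free ℤ ↥M] [Module.Finite ℤ ↥M]
    (Δ : Set V) (hΔspan : Δ ⊆ (Submodule.span ℝ (M : Set V) : Set V))
    (hΔbdd : Bornology.IsBounded Δ) (hΔconv : Convex ℝ Δ)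
    (hΔsymm : ∀ x ∈ Δ, -x ∈ Δ)
    (a : ℝ) (ha : 1 ≤ a) :
    0 ≤ Real.log ((((M : Set V)) ∩ a • Δ).ncard) - Real.log (((M : Set V) ∩ Δ).ncard) ∧
    Real.log (((M : Set V) ∩ a • Δ).ncard) - Real.log (((M : Set V) ∩ Δ).ncard) ≤
      Real.log (⌈2 * a⌉₊ : ℝ) * (Module.finrank ℤ ↥M) :=
  stmt_5_general M Δ hΔconv hΔsymm a ha
end

section
/- Let $M$ be a free $\mathbb{Z}$-module of finite rank. For a subset $\Gamma \subseteq M$, the following two conditions are equivalent: (a) there exist a $\mathbb{Z}$-submodule $N$ of $M$ and a convex subset $\Delta \subseteq M \otimes_{\mathbb{Z}} \mathbb{R}$ such that $\Gamma = N \cap \Delta$; (c) $\Gamma = \bigcup_{l \geq 1} \{ (\gamma_1 + \cdots + \gamma_l)/l \in \langle \Gamma \rangle_{\mathbb{Z}} : \gamma_1, \dots, \gamma_l \in \Gamma \}$, i.e., $\Gamma$ consists exactly of those elements of the $\mathbb{Z}$-span of $\Gamma$ that are averages of finitely many elements of $\Gamma$ (computed in $M \otimes_{\mathbb{Z}} \mathbb{Q}$).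 -/
/-!
If `Γ = N ∩ Δ`, then an element of `⟨Γ⟩ ⊆ N` that is an average of points of `Γ` lies in the
convex set `Δ`, hence in `Γ`. Conversely, if `Γ` is closed under such averages, take
`N = ⟨Γ⟩` and `Δ` the real convex hull of `Γ`. By Carathéodory, a lattice point `x` of `Δ` is a
convex combination of affinely independent points of `Γ`; its barycentric coordinates are then
unique, so they are fixed by a `ℚ`-linear retraction `ℝ → ℚ` and are rational. Clearing
denominators writes `x` as an average of points of `Γ` with repetitions.
-/

open TensorProduct

theorem TensorProduct.one_tmul_injective {R A M : Type*} [CommRing R] [Ring A] [Algebra R A]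
    [AddCommGroup M] [Module R M] [Module.Flat R M] (ha : Function.Injective (algebraMap R A)) :
    Function.Injective fun x : M => (1 : A) ⊗ₜ[R] x := by
  convert Module.Flat.rTensor_preserves_injective_linearMap (M := M) (Algebra.linearMap R A) ha
    |>.comp (TensorProduct.lid R M).symm.injective
  simp

theorem exists_nat_eq_div_sum {ι : Type*} [Fintype ι] {q : ι → ℚ} (hq0 : ∀ i, 0 ≤ q i)
    (hq1 : ∑ i, q i = 1) : ∃ K : ι → ℕ, 0 < ∑ i, K i ∧ ∀ i, q i = K i / ∑ j, K j := by
  set D := ∏ i, (q i).den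
  have hK : ∀ i, (((q i).num.toNat * (D / (q i).den) : ℕ) : ℚ) = q i * D := by
    intro i
    have hden : (q i).den ∣ D := Finset.dvd_prod_of_mem _ (Finset.mem_univ i)
    have hnum : ((q i).num.toNat : ℚ) = (q i).num := by
      exact_mod_cast Int.toNat_of_nonneg (Rat.num_nonneg.2 (hq0 i))
    rw [Nat.cast_mul, Nat.cast_div hden (by positivity), hnum, ← Rat.mul_den_eq_num]
    field_simp
  have hsum : ((∑ i, (q i).num.toNat * (D / (q i).den) : ℕ) : ℚ) = D := by
    rw [Nat.cast_sum]
    simp only [hK, ← Finset.sum_mul, hq1, one_mul]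
  refine ⟨fun i => (q i).num.toNat * (D / (q i).den), ?_, fun i => ?_⟩
  · exact_mod_cast hsum ▸ (by positivity : (0 : ℚ) < D)
  · rw [hsum, hK, mul_div_cancel_right₀ _ (by positivity)]

theorem exists_rat_eq_of_affineIndependent {𝕜 M ι : Type*} [Field 𝕜] [CharZero 𝕜]
    [AddCommGroup M] [Fintype ι] {p : ι → M} {x : M} {w : ι → 𝕜} (hw : ∑ i, w i = 1)
    (hp : AffineIndependent 𝕜 fun i => (1 : 𝕜) ⊗ₜ[ℤ] p i)
    (hx : (1 : 𝕜) ⊗ₜ[ℤ] x = ∑ i, w i • (1 : 𝕜) ⊗ₜ[ℤ] p i) :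
    ∃ q : ι → ℚ, ∀ i, (q i : 𝕜) = w i := by
  obtain ⟨π, hπ⟩ := (Algebra.linearMap ℚ 𝕜).exists_leftInverse_of_injective
    (LinearMap.ker_eq_bot.2 (algebraMap ℚ 𝕜).injective)
  let ρ : 𝕜 →ₗ[ℤ] 𝕜 := (Algebra.linearMap ℚ 𝕜 ∘ₗ π).toAddMonoidHom.toIntLinearMap
  have hρ1 : ρ 1 = 1 := by
    simpa [ρ] using congrArg (algebraMap ℚ 𝕜) (LinearMap.congr_fun hπ 1)
  have hρ : ∀ (r : 𝕜) (y : M), ρ.rTensor M (r • (1 : 𝕜) ⊗ₜ[ℤ] y) = ρ r • (1 : 𝕜) ⊗ₜ[ℤ] y := by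
    intro r y
    simp only [smul_tmul', smul_eq_mul, mul_one, LinearMap.rTensor_tmul]
  -- `ρ ⊗ id` fixes `1 ⊗ x`, so `ρ ∘ w` are barycentric coordinates of it as well.
  have hsum : ∑ i, ρ (w i) = 1 := by rw [← map_sum, hw, hρ1]
  have hρx : ∑ i, ρ (w i) • (1 : 𝕜) ⊗ₜ[ℤ] p i = ∑ i, w i • (1 : 𝕜) ⊗ₜ[ℤ] p i := by
    simp only [← hρ, ← map_sum, ← hx, LinearMap.rTensor_tmul, hρ1]
  have hweq := (affineIndependent_iff_eq_of_fintype_affineCombination_eq 𝕜 _).1 hp _ _ hsum hw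
    (by rwa [Finset.affineCombination_eq_linear_combination _ _ _ hsum,
      Finset.affineCombination_eq_linear_combination _ _ _ hw])
  exact ⟨fun i => π (w i), congrFun hweq⟩

def IsAverageOf {M : Type*} [AddCommGroup M] (Γ : Set M) (x : M) : Prop :=
  ∃ l : ℕ, 0 < l ∧ ∃ γ : Fin l → M, (∀ i, γ i ∈ Γ) ∧ (l : ℤ) • x = ∑ i, γ i

namespace IsAverageOf

variable {M : Type*} [AddCommGroup M] {Γ : Set M} {x : M}

theorem of_mem (hx : x ∈ Γ) : IsAverageOf Γ x :=
  ⟨1, one_pos, fun _ => x, fun _ => hx, by simp⟩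

theorem of_nsmul_eq_sum {ι : Type*} [Fintype ι] {p : ι → M} (hp : ∀ i, p i ∈ Γ)
    {K : ι → ℕ} (hK : 0 < ∑ i, K i) (hx : (∑ i, K i) • x = ∑ i, K i • p i) :
    IsAverageOf Γ x := by
  let e : (Σ i, Fin (K i)) ≃ Fin (∑ i, K i) := Fintype.equivFinOfCardEq (by simp)
  refine ⟨_, hK, fun j => p (e.symm j).1, fun j => hp _, ?_⟩
  rw [natCast_zsmul, hx, Equiv.sum_comp e.symm (fun s => p s.1), ← Finset.univ_sigma_univ,
    Finset.sum_sigma]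
  simp

theorem map_mem {𝕜 E : Type*} [Field 𝕜] [LinearOrder 𝕜] [IsStrictOrderedRing 𝕜]
    [AddCommGroup E] [Module 𝕜 E] {Δ : Set E} (hΔ : Convex 𝕜 Δ) (f : M →+ E)
    (hΓ : ∀ γ ∈ Γ, f γ ∈ Δ) (hx : IsAverageOf Γ x) : f x ∈ Δ := by
  obtain ⟨l, hl, γ, hγ, hsum⟩ := hx
  have hfx : Finset.univ.centerMass (fun _ => (1 : 𝕜)) (fun i => f (γ i)) = f x := by
    simp only [Finset.centerMass, one_smul, Finset.sum_const, Finset.card_univ, Fintype.card_fin,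
      nsmul_eq_mul, mul_one]
    rw [← map_sum, ← hsum, map_zsmul, natCast_zsmul, ← Nat.cast_smul_eq_nsmul 𝕜,
      inv_smul_smul₀ (by positivity)]
  rw [← hfx]
  exact hΔ.centerMass_mem (fun _ _ => zero_le_one) (by simpa using hl) fun i _ => hΓ _ (hγ i)

theorem of_tmul_mem_convexHull {𝕜 : Type*} [Field 𝕜] [LinearOrder 𝕜] [IsStrictOrderedRing 𝕜]
    [Module.Flat ℤ M]
    (hx : (1 : 𝕜) ⊗ₜ[ℤ] x ∈ convexHull 𝕜 ((fun y : M => (1 : 𝕜) ⊗ₜ[ℤ] y) '' Γ)) :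
    IsAverageOf Γ x := by
  obtain ⟨ι, _, z, w, hzΓ, hz, hw0, hw1, hwx⟩ := eq_pos_convex_span_of_mem_convexHull hx
  choose p hpΓ hpz using fun i => hzΓ (Set.mem_range_self i)
  obtain rfl : z = fun i => (1 : 𝕜) ⊗ₜ[ℤ] p i := funext fun i => (hpz i).symm
  obtain ⟨q, hqw⟩ := exists_rat_eq_of_affineIndependent hw1 hz hwx.symm
  have hq0 : ∀ i, 0 ≤ q i := fun i => by exact_mod_cast (hqw i).symm ▸ (hw0 i).le
  have hq1 : ∑ i, q i = 1 := by
    have : ((∑ i, q i : ℚ) : 𝕜) = 1 := by push_cast; simp_rw [hqw]; exact hw1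
    exact_mod_cast this
  obtain ⟨K, hK, hqK⟩ := exists_nat_eq_div_sum hq0 hq1
  have hKq : ∀ i, ((∑ j, K j : ℕ) : 𝕜) * q i = K i := fun i => by
    rw [hqK, Rat.cast_div, Rat.cast_natCast, Rat.cast_natCast, mul_div_cancel₀ _ (by positivity)]
  refine of_nsmul_eq_sum hpΓ hK (one_tmul_injective (A := 𝕜) Int.cast_injective ?_)
  simp only [tmul_sum, tmul_smul, ← Nat.cast_smul_eq_nsmul 𝕜, ← hwx, Finset.smul_sum, smul_smul,
    ← hqw, hKq]

end IsAverageOf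

theorem stmt_8_general {M : Type*} [AddCommGroup M] [Module.Free ℤ M]
    (Γ : Set M) :
    (∃ (N : Submodule ℤ M) (Δ : Set (ℝ ⊗[ℤ] M)), Convex ℝ Δ ∧
      Γ = {x : M | x ∈ N ∧ ((1 : ℝ) ⊗ₜ[ℤ] x : ℝ ⊗[ℤ] M) ∈ Δ}) ↔
    Γ = {x : M | x ∈ Submodule.span ℤ Γ ∧ ∃ l : ℕ, 0 < l ∧ ∃ γ : Fin l → M,
      (∀ i, γ i ∈ Γ) ∧ (l : ℤ) • x = ∑ i, γ i} := by
  constructor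
  · rintro ⟨N, Δ, hΔ, rfl⟩
    ext x
    refine ⟨fun hx => ⟨Submodule.subset_span hx, IsAverageOf.of_mem hx⟩, fun ⟨hspan, hx⟩ => ?_⟩
    exact ⟨Submodule.span_le.2 (fun y hy => hy.1) hspan,
      IsAverageOf.map_mem hΔ (TensorProduct.mk ℤ ℝ M 1).toAddMonoidHom (fun y hy => hy.2) hx⟩
  · intro hΓ
    refine ⟨Submodule.span ℤ Γ, convexHull ℝ ((fun y : M => (1 : ℝ) ⊗ₜ[ℤ] y) '' Γ),
      convex_convexHull ℝ _, ?_⟩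
    ext x
    refine ⟨fun hx => ⟨Submodule.subset_span hx, subset_convexHull ℝ _ ⟨x, hx, rfl⟩⟩,
      fun ⟨hspan, hx⟩ => ?_⟩
    rw [hΓ]
    exact ⟨hspan, IsAverageOf.of_tmul_mem_convexHull hx⟩

/-- Let `M` be a free `ℤ`-module of finite rank.  For a subset `Γ ⊆ M` the
following are equivalent:
(a) there exist a `ℤ`-submodule `N` of `M` and a convex subset `Δ ⊆ M ⊗ ℝ` with `Γ = N ∩ Δ`
    (intersection taken via the natural map `M → M ⊗ ℝ`, `x ↦ 1 ⊗ x`);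
(c) `Γ` consists exactly of those elements `x` of the `ℤ`-span of `Γ` that are averages of
    finitely many elements of `Γ`, i.e. `l • x = γ₁ + ⋯ + γ_l` for some `l ≥ 1` and
    `γ₁, …, γ_l ∈ Γ`. -/
theorem stmt_8 {M : Type*} [AddCommGroup M] [Module.Free ℤ M] [Module.Finite ℤ M]
    (Γ : Set M) :
    (∃ (N : Submodule ℤ M) (Δ : Set (ℝ ⊗[ℤ] M)), Convex ℝ Δ ∧
      Γ = {x : M | x ∈ N ∧ ((1 : ℝ) ⊗ₜ[ℤ] x : ℝ ⊗[ℤ] M) ∈ Δ}) ↔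
    Γ = {x : M | x ∈ Submodule.span ℤ Γ ∧ ∃ l : ℕ, 0 < l ∧ ∃ γ : Fin l → M,
      (∀ i, γ i ∈ Γ) ∧ (l : ℤ) • x = ∑ i, γ i} :=
  stmt_8_general Γ
end

section
/- Let $X$ be a projective variety over a field $k$, let $L$ be a line bundle on $X$, and let $V_\bullet$ be a graded $k$-linear series belonging to $L$ (a graded $k$-subalgebra of $\bigoplus_{m \geq 0} H^0(X, mL)$). For line bundles $A, B$ on $X$ and integers $a, b \geq 1$, one has the inclusion of base loci $\mathbf{B}(V_\bullet; A, a) \subseteq \mathbf{B}(V_\bullet; B, b) \cup \mathbf{B}((1/b)B - (1/a)A)$. -/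
/-- An abstract model of the theory of (graded) linear series on a projective variety `X` over
a field `k`.  Line bundles on `X` form an abelian group `Pic`; the global sections of all line
bundles are realized inside a single commutative `k`-algebra `R` (via trivializations at the
generic point, e.g. `R` = the function field); `H D` is the space `H⁰(X, D)` of global
sections of `D`, and `vanish D s x` records the vanishing at the point `x ∈ X` of the section
`s ∈ H D` of the line bundle `D`. -/
structure LinearSeriesTheory (k : Type*) [Field k] (X : Type*) (Pic : Type*)
    [AddCommGroup Pic] (R : Type*) [CommRing R] [Algebra k R] where
  H : Pic → Submodule k R
  one_mem : (1 : R) ∈ H 0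
  mul_mem : ∀ {D E : Pic} {s t : R}, s ∈ H D → t ∈ H E → s * t ∈ H (D + E)
  vanish : Pic → R → X → Prop
  vanish_zero : ∀ D x, vanish D 0 x
  vanish_add : ∀ D (s t : R) x, vanish D s x → vanish D t x → vanish D (s + t) x
  vanish_smul : ∀ D (c : k) (s : R) x, vanish D s x → vanish D (c • s) x
  vanish_mul : ∀ {D E : Pic} (s t : R) (x : X), s ∈ H D → t ∈ H E →
    (vanish (D + E) (s * t) x ↔ vanish D s x ∨ vanish E t x)

namespace LinearSeriesTheory

variable {k X Pic R : Type*} [Field k] [AddCommGroup Pic] [CommRing R] [Algebra k R]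
variable (T : LinearSeriesTheory k X Pic R)

/-- The base locus `Bs V` of a set `V` of sections of the line bundle `D`. -/
def Bs (D : Pic) (V : Set R) : Set X := {x | ∀ s ∈ V, T.vanish D s x}

/-- `Λ(V•; A, a) ⊆ H⁰(aL - A)`: the span of the sections `s ∈ H⁰(aL - A)` such that for all
sufficiently large `p`, the image of `H⁰(pA) → H⁰(paL)`, `t ↦ t ⊗ s^{⊗p}`, lies in `V_{pa}`. -/
def Lambda (L : Pic) (V : ℕ → Submodule k R) (A : Pic) (a : ℕ) : Submodule k R :=
  Submodule.span k {s : R | s ∈ T.H (a • L - A) ∧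
    ∃ p₀ : ℕ, ∀ p ≥ p₀, ∀ t ∈ T.H (p • A), t * s ^ p ∈ V (p * a)}

/-- `𝐁(V•; A, a) = ⋂_{n ≥ 1} Bs Λ(V•; nA, na)`. -/
def BB (L : Pic) (V : ℕ → Submodule k R) (A : Pic) (a : ℕ) : Set X :=
  ⋂ n ∈ {n : ℕ | 1 ≤ n}, T.Bs ((n * a) • L - n • A) (T.Lambda L V (n • A) (n * a))

/-- The stable base locus `𝐁(D) = ⋂_{m ≥ 1} Bs (H⁰(mD))` of a line bundle `D`. -/
def SBL (D : Pic) : Set X :=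
  ⋂ m ∈ {m : ℕ | 1 ≤ m}, T.Bs (m • D) (T.H (m • D))

/-- A graded `k`-linear series belonging to `L`: a graded `k`-subalgebra of `⊕ H⁰(mL)`. -/
structure IsGradedLinearSeries (L : Pic) (V : ℕ → Submodule k R) : Prop where
  le : ∀ m, V m ≤ T.H (m • L)
  one_mem : (1 : R) ∈ V 0
  mul_mem : ∀ {m n : ℕ} {s t : R}, s ∈ V m → t ∈ V n → s * t ∈ V (m + n)

end LinearSeriesTheory


section Aux

variable {k X Pic R : Type*} [Field k] [AddCommGroup Pic] [CommRing R] [Algebra k R]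
variable (T : LinearSeriesTheory k X Pic R)

lemma LST_pow_mem {D : Pic} {s : R} (hs : s ∈ T.H D) : ∀ p : ℕ, s ^ p ∈ T.H (p • D)
  | 0 => by simpa using T.one_mem
  | (p + 1) => by
      rw [pow_succ, succ_nsmul]
      exact T.mul_mem (LST_pow_mem hs p) hs

lemma LST_vanish_pow {D : Pic} {s : R} {x : X} (hs : s ∈ T.H D) :
    ∀ p : ℕ, 1 ≤ p → (T.vanish (p • D) (s ^ p) x ↔ T.vanish D s x)
  | 1, _ => by rw [pow_one, one_smul]
  | (p + 2), _ => by
      rw [pow_succ, succ_nsmul,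
        T.vanish_mul _ _ _ (LST_pow_mem T hs (p + 1)) hs,
        LST_vanish_pow hs (p + 1) (by omega), or_self]

lemma LST_vanish_span {D : Pic} {G : Set R} {x : X}
    (hG : ∀ g ∈ G, T.vanish D g x) : ∀ s ∈ Submodule.span k G, T.vanish D s x := by
  intro s hs
  induction hs using Submodule.span_induction with
  | mem g hg => exact hG g hg
  | zero => exact T.vanish_zero D x
  | add u v _ _ hu hv => exact T.vanish_add D u v x hu hv
  | smul c u _ hu => exact T.vanish_smul D c u x hu

end Aux

/-- Let `X` be a projective variety over a field `k`, `L` a line bundle on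
`X`, and `V•` a graded `k`-linear series belonging to `L`.  For line bundles `A, B` on `X` and
integers `a, b ≥ 1`, one has `𝐁(V•; A, a) ⊆ 𝐁(V•; B, b) ∪ 𝐁((1/b)B - (1/a)A)`, where the
stable base locus of the `ℚ`-line bundle `(1/b)B - (1/a)A` is `𝐁(aB - bA)`. -/
theorem stmt_10 {k X Pic R : Type*} [Field k] [AddCommGroup Pic] [CommRing R] [Algebra k R]
    (T : LinearSeriesTheory k X Pic R)
    (L : Pic) (V : ℕ → Submodule k R) (hV : T.IsGradedLinearSeries L V)
    (A B : Pic) (a b : ℕ) (ha : 1 ≤ a) (hb : 1 ≤ b) :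
    T.BB L V A a ⊆ T.BB L V B b ∪ T.SBL (a • B - b • A) := by
  intro x hx
  by_contra hcon
  simp only [Set.mem_union, not_or] at hcon
  obtain ⟨h1, h2⟩ := hcon
  -- extract a nonvanishing generator of Λ(V•; nB, nb)
  simp only [LinearSeriesTheory.BB, LinearSeriesTheory.SBL, Set.mem_iInter, not_forall,
    LinearSeriesTheory.Bs, Set.mem_setOf_eq] at h1 h2
  obtain ⟨n, hn, s0, hs0mem, hs0nv⟩ := h1
  obtain ⟨m, hm, u, humem, hunv⟩ := h2
  -- get a nonvanishing generator from the span
  have hgen : ∃ s, (s ∈ T.H ((n * b) • L - n • B) ∧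
      ∃ p₀ : ℕ, ∀ p ≥ p₀, ∀ t ∈ T.H (p • (n • B)), t * s ^ p ∈ V (p * (n * b))) ∧
      ¬ T.vanish ((n * b) • L - n • B) s x := by
    by_contra hall
    push_neg at hall
    exact hs0nv (LST_vanish_span T (fun g hg => hall g hg) s0 hs0mem)
  obtain ⟨s, ⟨hsH, p₀, hsp⟩, hsnv⟩ := hgen
  set N := n * m * b with hN
  have hN1 : 1 ≤ N := Nat.mul_pos (Nat.mul_pos hn hm) hb
  -- the new section
  set s' := s ^ (m * a) * u ^ n with hs'
  have hma : 1 ≤ m * a := Nat.mul_pos hm ha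
  -- membership of s'
  have hsma : s ^ (m * a) ∈ T.H ((m * a) • ((n * b) • L - n • B)) := LST_pow_mem T hsH _
  have hun : u ^ n ∈ T.H (n • (m • (a • B - b • A))) := LST_pow_mem T humem _
  have heq : (m * a) • ((n * b) • L - n • B) + n • (m • (a • B - b • A))
      = (N * a) • L - N • A := by
    simp only [hN]
    module
  have hs'H : s' ∈ T.H ((N * a) • L - N • A) := by
    rw [← heq]; exact T.mul_mem hsma hun
  -- the Λ-property of s'
  have hprop : ∃ p₀' : ℕ, ∀ p ≥ p₀', ∀ t ∈ T.H (p • (N • A)), t * s' ^ p ∈ V (p * (N * a)) := by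
    refine ⟨p₀, fun p hp t ht => ?_⟩
    have hunp : u ^ (n * p) ∈ T.H ((n * p) • (m • (a • B - b • A))) := LST_pow_mem T humem _
    have heq2 : p • (N • A) + (n * p) • (m • (a • B - b • A)) = (m * a * p) • (n • B) := by
      simp only [hN]
      module
    have htu : t * u ^ (n * p) ∈ T.H ((m * a * p) • (n • B)) := by
      rw [← heq2]; exact T.mul_mem ht hunp
    have hmap : m * a * p ≥ p₀ := le_trans hp (le_mul_of_one_le_left (Nat.zero_le _) hma)
    have := hsp (m * a * p) hmap _ htu
    have hidx : m * a * p * (n * b) = p * (N * a) := by simp only [hN]; ring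
    have hre : t * u ^ (n * p) * s ^ (m * a * p) = t * s' ^ p := by
      simp only [hs']; ring
    rw [hidx, hre] at this
    exact this
  -- nonvanishing of s'
  have hs'nv : ¬ T.vanish ((N * a) • L - N • A) s' x := by
    rw [← heq, T.vanish_mul _ _ _ hsma hun,
      LST_vanish_pow T hsH (m * a) hma, LST_vanish_pow T humem n hn]
    rintro (h | h)
    · exact hsnv h
    · exact hunv h
  -- contradiction with hx
  have hxmem : x ∈ T.Bs ((N * a) • L - N • A) (T.Lambda L V (N • A) (N * a)) :=
    Set.mem_iInter₂.mp hx N hN1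
  have hs'Λ : s' ∈ T.Lambda L V (N • A) (N * a) :=
    Submodule.subset_span ⟨hs'H, hprop⟩
  exact hs'nv (hxmem s' hs'Λ)
end
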